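/- Consider a degree-corrected block model mean matrix P = diag(ψ) Θ B Θ^T diag(ψ), where Θ is an n×K membership matrix, B is symmetric K×K, ψ has positive entries, and P has rank K. If P = UDU^T is the rank-K eigendecomposition (U ∈ ℝ^{n×K} with orthonormal columns, D diagonal invertible), then there exists a K×K orthogonal matrix H such that for every k and every i ∈ G_k, the i-th row of U equals ψ̃_i H_{k*}, where ψ̃_i = ψ_i/‖φ_k‖ and φ_k is ψ restricted to community G_k (zero elsewhere). -/

import Mathlib

/-!
Write `V` for the membership matrix with rows normalized by the community norms, i.e.
`V i k = ψ i / ‖φ k‖` if `i ∈ G_k` and `0` otherwise. Its columns are orthonormal and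
`P = V M Vᵀ` with `M = diag ‖φ‖ * B * diag ‖φ‖`, so `V Vᵀ` is the identity on the range
of `P`. Since `D` is invertible, `U = P U D⁻¹` has its columns in that range, hence
`U = V H` with `H = Vᵀ U`, and `Hᵀ H = Uᵀ V Vᵀ U = Uᵀ U = 1`. Reading off row `i` of
`U = V H` gives the claim.
-/

open Matrix

namespace Matrix

theorem mul_eq_self_of_mul_eq_mul_isUnit {m n R : Type*} [Fintype m] [Fintype n] [DecidableEq n]
    [Semiring R] {Q P : Matrix m m R} {U : Matrix m n R} {D : Matrix n n R}
    (hQP : Q * P = P) (hPU : P * U = U * D) (hD : IsUnit D) : Q * U = U := by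
  obtain ⟨D, rfl⟩ := hD
  have hU : U = P * U * (↑D⁻¹ : Matrix n n R) := by
    rw [hPU, Matrix.mul_assoc, Units.mul_inv, Matrix.mul_one]
  rw [hU, ← Matrix.mul_assoc, ← Matrix.mul_assoc, hQP]

theorem IsDiag.isUnit {n R : Type*} [Fintype n] [DecidableEq n] [Field R] {D : Matrix n n R}
    (hD : D.IsDiag) (hdiag : ∀ k, D k k ≠ 0) : IsUnit D := by
  rw [← (isDiag_iff_diagonal_diag D).mp hD, isUnit_diagonal, Pi.isUnit_iff]
  exact fun k => (hdiag k).isUnit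

end Matrix

section NormalizedMembership

variable {ι κ R : Type*} [DecidableEq κ] [Field R]

def normalizedMembership (g : ι → κ) (ψ : ι → R) (c : κ → R) : Matrix ι κ R :=
  of fun i k => if g i = k then ψ i / c k else 0

theorem normalizedMembership_mul_apply {ν : Type*} [Fintype κ] (g : ι → κ) (ψ : ι → R)
    (c : κ → R) (H : Matrix κ ν R) (i : ι) (j : ν) :
    (normalizedMembership g ψ c * H) i j = ψ i / c (g i) * H (g i) j := by
  simp [normalizedMembership, mul_apply, ite_mul]

theorem diagonal_mul_membership_eq_normalizedMembership_mul [Fintype ι] [DecidableEq ι]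
    [Fintype κ] {g : ι → κ} (ψ : ι → R) {c : κ → R} (hc : ∀ k, c k ≠ 0) :
    diagonal ψ * of (fun i k => if g i = k then (1 : R) else 0) =
      normalizedMembership g ψ c * diagonal c := by
  ext i k
  by_cases h : g i = k <;> simp [normalizedMembership, diagonal_mul, mul_diagonal, h, hc]

theorem normalizedMembership_transpose_mul_self [Fintype ι] {g : ι → κ} {ψ : ι → R}
    {c : κ → R} (hc : ∀ k, c k ≠ 0)
    (hnorm : ∀ k, ∑ i, (if g i = k then ψ i else 0) ^ 2 = c k ^ 2) :
    (normalizedMembership g ψ c)ᵀ * normalizedMembership g ψ c = 1 := by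
  ext k l
  by_cases hkl : k = l
  · subst hkl
    have hterm : ∀ i, (if g i = k then ψ i / c k else 0) * (if g i = k then ψ i / c k else 0) =
        (if g i = k then ψ i else 0) ^ 2 / c k ^ 2 := by
      intro i; split_ifs <;> ring
    simp only [normalizedMembership, mul_apply, transpose_apply, of_apply, hterm, one_apply_eq,
      ← Finset.sum_div, hnorm, div_self (pow_ne_zero 2 (hc k))]
  · have hterm : ∀ i,
        (if g i = k then ψ i / c k else 0) * (if g i = l then ψ i / c l else 0) = 0 := by
      intro i
      split_ifs with hk hl
      · exact absurd (hk.symm.trans hl) hkl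
      all_goals simp
    simp [normalizedMembership, mul_apply, hterm, one_apply_ne hkl]

end NormalizedMembership

theorem stmt4_general (n K : ℕ) (g : Fin n → Fin K)
    (Θ : Matrix (Fin n) (Fin K) ℝ)
    (hΘ : ∀ i k, Θ i k = if g i = k then 1 else 0)
    (ψ : Fin n → ℝ)
    (φ : Fin K → Fin n → ℝ)
    (hφ : ∀ k i, φ k i = if g i = k then ψ i else 0)
    (φnorm : Fin K → ℝ)
    (hφnorm : ∀ k, φnorm k = Real.sqrt (∑ i, (φ k i) ^ 2))
    (hpos : ∀ k, 0 < φnorm k)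
    (B : Matrix (Fin K) (Fin K) ℝ)
    (P : Matrix (Fin n) (Fin n) ℝ)
    (hPdef : P = Matrix.diagonal ψ * Θ * B * Θᵀ * Matrix.diagonal ψ)
    (U : Matrix (Fin n) (Fin K) ℝ) (D : Matrix (Fin K) (Fin K) ℝ)
    (hDdiag : ∀ k l, k ≠ l → D k l = 0) (hDnz : ∀ k, D k k ≠ 0)
    (hUorth : Uᵀ * U = 1)
    (hP : P = U * D * Uᵀ) :
    ∃ H : Matrix (Fin K) (Fin K) ℝ, Hᵀ * H = 1 ∧
      ∀ (k : Fin K) (i : Fin n), g i = k →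
        ∀ j, U i j = (ψ i / φnorm k) * H k j := by
  have hc : ∀ k, φnorm k ≠ 0 := fun k => (hpos k).ne'
  have hnorm : ∀ k, ∑ i, (if g i = k then ψ i else 0) ^ 2 = φnorm k ^ 2 := fun k => by
    rw [hφnorm, Real.sq_sqrt (by positivity)]
    simp only [hφ]
  set V := normalizedMembership g ψ φnorm
  have hVV : Vᵀ * V = 1 := normalizedMembership_transpose_mul_self hc hnorm
  have hψΘ : diagonal ψ * Θ = V * diagonal φnorm := by
    rw [← diagonal_mul_membership_eq_normalizedMembership_mul ψ hc]
    exact congrArg _ (ext hΘ)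
  have hPV : P = V * (diagonal φnorm * B * diagonal φnorm) * Vᵀ := by
    have : P = diagonal ψ * Θ * B * (diagonal ψ * Θ)ᵀ := by
      simp only [hPdef, transpose_mul, diagonal_transpose, Matrix.mul_assoc]
    simp only [this, hψΘ, transpose_mul, diagonal_transpose, Matrix.mul_assoc]
  have hVU : V * (Vᵀ * U) = U := by
    rw [← Matrix.mul_assoc]
    refine mul_eq_self_of_mul_eq_mul_isUnit (P := P) ?_ ?_ (IsDiag.isUnit hDdiag hDnz)
    · rw [hPV, Matrix.mul_assoc V Vᵀ, ← Matrix.mul_assoc Vᵀ, ← Matrix.mul_assoc Vᵀ, hVV,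
        Matrix.one_mul]
      simp only [Matrix.mul_assoc]
    · rw [hP, Matrix.mul_assoc, Matrix.mul_assoc, hUorth, Matrix.mul_one]
  refine ⟨Vᵀ * U, ?_, fun k i hik j => ?_⟩
  · rw [transpose_mul, transpose_transpose, Matrix.mul_assoc, hVU, hUorth]
  · calc U i j = (V * (Vᵀ * U)) i j := by rw [hVU]
      _ = ψ i / φnorm k * (Vᵀ * U) k j := by rw [normalizedMembership_mul_apply, hik]

/-- Spectral structure of the DCBM mean matrix. -/
theorem stmt4 (n K : ℕ) (g : Fin n → Fin K)
    (Θ : Matrix (Fin n) (Fin K) ℝ)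
    (hΘ : ∀ i k, Θ i k = if g i = k then 1 else 0)
    (ψ : Fin n → ℝ) (hψ : ∀ i, 0 < ψ i)
    (φ : Fin K → Fin n → ℝ)
    (hφ : ∀ k i, φ k i = if g i = k then ψ i else 0)
    (φnorm : Fin K → ℝ)
    (hφnorm : ∀ k, φnorm k = Real.sqrt (∑ i, (φ k i) ^ 2))
    (hpos : ∀ k, 0 < φnorm k)
    (B : Matrix (Fin K) (Fin K) ℝ) (hBsymm : B.IsSymm)
    (P : Matrix (Fin n) (Fin n) ℝ)
    (hPdef : P = Matrix.diagonal ψ * Θ * B * Θᵀ * Matrix.diagonal ψ)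
    (hrank : P.rank = K)
    (U : Matrix (Fin n) (Fin K) ℝ) (D : Matrix (Fin K) (Fin K) ℝ)
    (hDdiag : ∀ k l, k ≠ l → D k l = 0) (hDnz : ∀ k, D k k ≠ 0)
    (hUorth : Uᵀ * U = 1)
    (hP : P = U * D * Uᵀ) :
    ∃ H : Matrix (Fin K) (Fin K) ℝ, Hᵀ * H = 1 ∧
      ∀ (k : Fin K) (i : Fin n), g i = k →
        ∀ j, U i j = (ψ i / φnorm k) * H k j :=
  stmt4_general n K g Θ hΘ ψ φ hφ φnorm hφnorm hpos B P hPdef U D hDdiag hDnz hUorth hP
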